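/- arXiv:2012.02887 — 2 statements merged into one kernel-verified Lean document; each statement's English description precedes it below -/
import Mathlib

section
/- For Re(ν) > -1/2 and μ ∈ ℂ, ∫_{-π}^{π} e^{-iμπ·sgn(θ)} (1 − cos θ)^{ν} e^{iμθ} dθ = 2^{ν+2} ∫_0^{π/2} (cos θ)^{2ν} cos(2μθ) dθ. -/
/-!
Folding `[-π, 0]` onto `[0, π]` by `θ ↦ -θ`, the factor `(1 - cos θ)^ν` is even while the two
values of the sign turn the phases into `e^{±iμ(θ - π)}`, which add up to `2 cos (μ (θ - π))`.
The substitution `θ = π - 2u` then uses `1 - cos (π - 2u) = 2 cos² u` with `cos u ≥ 0` on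
`[0, π/2]`, so that `(1 - cos θ)^ν = 2^ν (cos u)^{2ν}`; the Jacobian gives the last factor `2`.
-/

open Complex Real MeasureTheory

theorem intervalIntegral.integral_symmetric_eq_integral_add_comp_neg {E : Type*}
    [NormedAddCommGroup E] [NormedSpace ℝ E] {F : ℝ → E} {a : ℝ}
    (hF : IntervalIntegrable F volume 0 a)
    (hF_neg : IntervalIntegrable (fun x ↦ F (-x)) volume 0 a) :
    ∫ x in -a..a, F x = ∫ x in 0..a, (F x + F (-x)) := by
  have hF_left : IntervalIntegrable F volume (-a) 0 := by
    simpa using ((IntervalIntegrable.iff_comp_neg (f := fun x ↦ F (-x))).mp hF_neg).symm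
  rw [← integral_add_adjacent_intervals hF_left hF, integral_add hF hF_neg, add_comm,
    integral_comp_neg, neg_zero]

theorem intervalIntegral.integral_eq_two_mul_integral_comp_sub_two_mul (g : ℝ → ℂ) (a : ℝ) :
    ∫ x in 0..a, g x = 2 * ∫ u in 0..a / 2, g (a - 2 * u) := by
  rw [integral_comp_sub_mul g two_ne_zero, show a - 2 * (a / 2) = 0 by ring, mul_zero, sub_zero,
    Complex.real_smul]
  push_cast
  ring

theorem Real.rpow_le_rpow_add_rpow {a b x : ℝ} (ha : 0 < a) (hax : a ≤ x) (hxb : x ≤ b)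
    (r : ℝ) : x ^ r ≤ a ^ r + b ^ r := by
  rcases le_total 0 r with hr | hr
  · linarith [rpow_le_rpow (ha.trans_le hax).le hxb hr, rpow_nonneg ha.le r]
  · linarith [rpow_le_rpow_of_nonpos ha hax hr, rpow_nonneg (ha.trans_le (hax.trans hxb)).le r]

theorem intervalIntegrable_one_sub_cos_cpow {ν : ℂ} (hν : -1 / 2 < ν.re) :
    IntervalIntegrable (fun θ : ℝ ↦ ((1 : ℂ) - Real.cos θ) ^ ν) volume 0 π := by
  have hmeas : Measurable fun θ : ℝ ↦ ((1 : ℂ) - Real.cos θ) ^ ν := by fun_prop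
  -- `1 - cos θ ≥ 2θ²/π²` controls the singularity at `0` when `ν.re < 0`.
  refine IntervalIntegrable.mono_fun'
    (g := fun θ ↦ (2 / π ^ 2) ^ ν.re * θ ^ (2 * ν.re) + 2 ^ ν.re)
    (((intervalIntegral.intervalIntegrable_rpow' (by linarith)).const_mul _).add
      intervalIntegrable_const) hmeas.aestronglyMeasurable ?_
  rw [Set.uIoc_of_le pi_pos.le]
  refine (ae_restrict_iff' measurableSet_Ioc).mpr (.of_forall fun θ hθ ↦ ?_)
  have hlow : 2 / π ^ 2 * θ ^ 2 ≤ 1 - Real.cos θ := by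
    linarith [cos_le_one_sub_mul_cos_sq (x := θ) (by rw [abs_of_pos hθ.1]; exact hθ.2)]
  have hpos : 0 < 2 / π ^ 2 * θ ^ 2 := by have := hθ.1; positivity
  have hsplit : (2 / π ^ 2 * θ ^ 2) ^ ν.re = (2 / π ^ 2) ^ ν.re * θ ^ (2 * ν.re) := by
    rw [mul_rpow (by positivity) (sq_nonneg θ), rpow_mul hθ.1.le, rpow_two]
  dsimp only
  rw [← ofReal_one, ← ofReal_sub, norm_cpow_eq_rpow_re_of_pos (hpos.trans_le hlow), ← hsplit]
  exact rpow_le_rpow_add_rpow hpos hlow (by linarith [neg_one_le_cos θ]) _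

theorem Complex.ofReal_sq_cpow {x : ℝ} (hx : 0 ≤ x) (ν : ℂ) :
    ((x ^ 2 : ℝ) : ℂ) ^ ν = (x : ℂ) ^ (2 * ν) := by
  rw [sq, ofReal_mul, mul_cpow_ofReal_nonneg hx hx, cpow_ofNat_mul, sq]

theorem one_sub_cos_pi_sub_two_mul_cpow {u : ℝ} (hu : 0 ≤ Real.cos u) (ν : ℂ) :
    ((1 : ℂ) - Real.cos (π - 2 * u)) ^ ν = 2 ^ ν * (Real.cos u : ℂ) ^ (2 * ν) := by
  have h : 1 - Real.cos (π - 2 * u) = 2 * Real.cos u ^ 2 := by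
    rw [Real.cos_pi_sub, Real.cos_two_mul]; ring
  rw [← ofReal_one, ← ofReal_sub, h, ofReal_mul,
    mul_cpow_ofReal_nonneg zero_le_two (sq_nonneg _), ofReal_sq_cpow hu, ofReal_ofNat]

noncomputable def twistedIntegrand (ν μ : ℂ) (θ : ℝ) : ℂ :=
  exp (-I * μ * π * (Real.sign θ : ℂ)) * ((1 : ℂ) - Real.cos θ) ^ ν * exp (I * μ * θ)

theorem twistedIntegrand_of_pos (ν μ : ℂ) {θ : ℝ} (hθ : 0 < θ) :
    twistedIntegrand ν μ θ = ((1 : ℂ) - Real.cos θ) ^ ν * exp (I * μ * (θ - π)) := by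
  rw [twistedIntegrand, Real.sign_of_pos hθ, mul_right_comm, ← Complex.exp_add]
  push_cast
  ring_nf

theorem twistedIntegrand_neg_of_pos (ν μ : ℂ) {θ : ℝ} (hθ : 0 < θ) :
    twistedIntegrand ν μ (-θ) = ((1 : ℂ) - Real.cos θ) ^ ν * exp (-I * μ * (θ - π)) := by
  rw [twistedIntegrand, Real.sign_neg, Real.sign_of_pos hθ, Real.cos_neg, mul_right_comm,
    ← Complex.exp_add]
  push_cast
  ring_nf

theorem twistedIntegrand_add_neg_of_pos (ν μ : ℂ) {θ : ℝ} (hθ : 0 < θ) :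
    twistedIntegrand ν μ θ + twistedIntegrand ν μ (-θ) =
      ((1 : ℂ) - Real.cos θ) ^ ν * (2 * Complex.cos (μ * (θ - π))) := by
  rw [twistedIntegrand_of_pos ν μ hθ, twistedIntegrand_neg_of_pos ν μ hθ, two_cos]
  ring_nf

theorem intervalIntegrable_twistedIntegrand {ν : ℂ} (hν : -1 / 2 < ν.re) (μ : ℂ) :
    IntervalIntegrable (twistedIntegrand ν μ) volume 0 π ∧
      IntervalIntegrable (fun θ ↦ twistedIntegrand ν μ (-θ)) volume 0 π := by
  have hf := intervalIntegrable_one_sub_cos_cpow hν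
  constructor
  · refine (hf.mul_continuousOn (by fun_prop : Continuous fun θ : ℝ ↦
      exp (I * μ * (θ - π))).continuousOn).congr fun θ hθ ↦ ?_
    exact (twistedIntegrand_of_pos ν μ (Set.uIoc_of_le pi_pos.le ▸ hθ).1).symm
  · refine (hf.mul_continuousOn (by fun_prop : Continuous fun θ : ℝ ↦
      exp (-I * μ * (θ - π))).continuousOn).congr fun θ hθ ↦ ?_
    exact (twistedIntegrand_neg_of_pos ν μ (Set.uIoc_of_le pi_pos.le ▸ hθ).1).symm

theorem integral_twistedIntegrand {ν : ℂ} (hν : -1 / 2 < ν.re) (μ : ℂ) :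
    ∫ θ in -π..π, twistedIntegrand ν μ θ =
      ∫ θ in 0..π, ((1 : ℂ) - Real.cos θ) ^ ν * (2 * Complex.cos (μ * (θ - π))) := by
  obtain ⟨hpos, hneg⟩ := intervalIntegrable_twistedIntegrand hν μ
  rw [intervalIntegral.integral_symmetric_eq_integral_add_comp_neg hpos hneg]
  refine intervalIntegral.integral_congr_ae (.of_forall fun θ hθ ↦ ?_)
  exact twistedIntegrand_add_neg_of_pos ν μ (Set.uIoc_of_le pi_pos.le ▸ hθ).1

theorem integral_sign_eq_cos_integral (ν μ : ℂ) (hν : (-1/2 : ℝ) < ν.re) :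
    ∫ θ in (-π)..π,
        Complex.exp (-Complex.I * μ * (π : ℂ) * (Real.sign θ : ℂ)) *
          ((1 : ℂ) - Real.cos θ) ^ ν * Complex.exp (Complex.I * μ * (θ : ℂ)) =
      (2 : ℂ) ^ (ν + 2) *
        ∫ θ in (0:ℝ)..(π/2), ((Real.cos θ : ℂ)) ^ (2 * ν) * Complex.cos (2 * μ * (θ : ℂ)) := by
  change ∫ θ in -π..π, twistedIntegrand ν μ θ = _
  rw [integral_twistedIntegrand hν, intervalIntegral.integral_eq_two_mul_integral_comp_sub_two_mul]
  have hsubst : ∀ u ∈ Set.uIcc 0 (π / 2),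
      ((1 : ℂ) - Real.cos (π - 2 * u)) ^ ν *
          (2 * Complex.cos (μ * ((π - 2 * u : ℝ) - π))) =
        2 ^ ν * 2 * ((Real.cos u : ℂ) ^ (2 * ν) * Complex.cos (2 * μ * u)) := by
    intro u hu
    rw [Set.uIcc_of_le (by positivity)] at hu
    have hcos : Complex.cos (μ * ((π - 2 * u : ℝ) - π)) = Complex.cos (2 * μ * u) := by
      rw [← Complex.cos_neg]
      push_cast
      ring_nf
    rw [one_sub_cos_pi_sub_two_mul_cpow
      (cos_nonneg_of_mem_Icc ⟨by linarith [hu.1, pi_pos], by linarith [hu.2]⟩), hcos]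
    ring
  rw [intervalIntegral.integral_congr hsubst, intervalIntegral.integral_const_mul,
    cpow_add _ _ two_ne_zero, cpow_ofNat]
  ring
end

section
/- For μ ∈ ℂ, z ∈ ℂ (z off the negative real axis if μ ∉ ℤ), the Bessel function of the first kind satisfies J_μ(z) = (1/(2π)) · (z/2)^μ / Γ(1+μ) · ∫_{-π}^{π} exp((iz/2) e^{−iθ}) · M(1, 1+μ; (iz/2) e^{iθ}) dθ, where M(1, 1+μ; w) = Σ_{k=0}^∞ w^k · Γ(1+μ)/Γ(1+μ+k) is the Kummer confluent hypergeometric function (for μ with Γ(1+μ) ≠ 0; equivalently state using γ*(μ,w) = e^{−w} M(1,1+μ;w)/Γ(1+μ)). -/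
open Complex Real MeasureTheory

/-- The Bessel function of the first kind, defined by its power series
(principal branch of `(z/2)^μ`). -/
noncomputable def besselJ (μ z : ℂ) : ℂ :=
  ∑' k : ℕ, (-1) ^ k * (z / 2) ^ (2 * (k : ℂ) + μ) /
    ((k.factorial : ℂ) * Complex.Gamma (μ + k + 1))

/-- The Kummer confluent hypergeometric function `M(1, b; w) = Σ_{k≥0} w^k Γ(b)/Γ(b+k)`. -/
noncomputable def kummerM1 (b w : ℂ) : ℂ :=
  ∑' k : ℕ, w ^ k * Complex.Gamma b / Complex.Gamma (b + k)

/-!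
Put `a = i z / 2`. On `|w| = |a|` both `exp` and `M(1, 1 + μ; ·)` are absolutely convergent
power series, so `exp (a e^{-iθ}) M(1, 1 + μ; a e^{iθ})` is an absolutely convergent double series
in `a^{m+n} e^{i(n-m)θ}`; integrating termwise over a period keeps only the diagonal `m = n`, giving
`2π Σ_k a^{2k} / (k! (1 + μ)_k)`. Since `a² = -(z/2)²`, multiplying by `(z/2)^μ / Γ(1 + μ)` gives
the series of `J_μ(z)`.
-/

open Filter Topology TopologicalSpace

lemma integral_exp_I_mul_intCast_mul (d : ℤ) :
    ∫ θ in (-π)..π, exp (I * d * θ) = if d = 0 then (2 * π : ℂ) else 0 := by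
  split_ifs with hd
  · simp only [hd, Int.cast_zero, mul_zero, zero_mul, Complex.exp_zero,
      intervalIntegral.integral_const, sub_neg_eq_add, real_smul, ofReal_add, mul_one]
    ring
  · have hc : I * d ≠ 0 := by simp [hd, I_ne_zero]
    have hperiod : exp (I * d * π) = exp (I * d * (-π : ℝ)) := by
      rw [← mul_one (exp (I * d * (-π : ℝ))), ← exp_int_mul_two_pi_mul_I d, ← Complex.exp_add]
      push_cast
      ring_nf
    rw [integral_exp_mul_complex hc, hperiod, sub_self, zero_div]

lemma integral_pow_mul_exp_neg_I_mul_pow_mul_exp_I (a : ℂ) (m n : ℕ) :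
    ∫ θ in (-π)..π, (a * exp (-I * θ)) ^ m * (a * exp (I * θ)) ^ n =
      if m = n then 2 * π * a ^ (2 * m) else 0 := by
  have hintegrand : ∀ θ : ℝ, (a * exp (-I * θ)) ^ m * (a * exp (I * θ)) ^ n =
      a ^ (m + n) * exp (I * ((n - m : ℤ) : ℂ) * θ) := fun θ => by
    rw [mul_pow, mul_pow, ← Complex.exp_nat_mul, ← Complex.exp_nat_mul, pow_add,
      show I * ((n - m : ℤ) : ℂ) * θ = m * (-I * θ) + n * (I * θ) by push_cast; ring,
      Complex.exp_add]
    ring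
  simp_rw [hintegrand, intervalIntegral.integral_const_mul, integral_exp_I_mul_intCast_mul,
    sub_eq_zero, Nat.cast_inj, eq_comm (a := n)]
  split_ifs with h
  · subst h
    ring
  · rw [mul_zero]

theorem integral_tsum_mul_tsum_eq_two_pi_mul_tsum_diag (c d : ℕ → ℂ) (a : ℂ)
    (hc : Summable fun m => ‖c m * a ^ m‖) (hd : Summable fun n => ‖d n * a ^ n‖) :
    ∫ θ in (-π)..π, (∑' m, c m * (a * exp (-I * θ)) ^ m) * ∑' n, d n * (a * exp (I * θ)) ^ n
      = 2 * π * ∑' k, c k * d k * a ^ (2 * k) := by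
  let F : ℕ × ℕ → C(ℝ, ℂ) := fun p =>
    ⟨fun θ => c p.1 * (a * exp (-I * θ)) ^ p.1 * (d p.2 * (a * exp (I * θ)) ^ p.2), by fun_prop⟩
  have hsum : Summable fun p => ‖(F p).restrict (⟨Set.uIcc (-π) π, isCompact_uIcc⟩ : Compacts ℝ)‖ :=
    (hc.mul_norm hd).of_nonneg_of_le (fun _ => norm_nonneg _) fun p =>
      (ContinuousMap.norm_le _ (norm_nonneg _)).2 fun θ => by simp [F, norm_exp]
  have hdiag : Function.support (fun p : ℕ × ℕ => c p.1 * d p.2 *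
      if p.1 = p.2 then 2 * π * a ^ (2 * p.1) else 0) ⊆ Set.range fun k => (k, k) := by
    rintro ⟨m, n⟩ hp
    by_cases h : m = n
    · exact ⟨m, by rw [h]⟩
    · simp [h] at hp
  calc _ = ∫ θ in (-π)..π, ∑' p, F p θ :=
        intervalIntegral.integral_congr fun θ _ => tsum_mul_tsum_of_summable_norm
          (by simpa [norm_exp] using hc) (by simpa [norm_exp] using hd)
    _ = ∑' p : ℕ × ℕ, c p.1 * d p.2 * if p.1 = p.2 then 2 * π * a ^ (2 * p.1) else 0 := by
        rw [← intervalIntegral.tsum_intervalIntegral_eq_of_summable_norm hsum]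
        refine tsum_congr fun p => ?_
        simp only [F, ContinuousMap.coe_mk, mul_mul_mul_comm (c p.1),
          intervalIntegral.integral_const_mul, integral_pow_mul_exp_neg_I_mul_pow_mul_exp_I]
    _ = ∑' k, c k * d k * (2 * π * a ^ (2 * k)) := by
        rw [← Function.Injective.tsum_eq (g := fun k : ℕ => (k, k))
          (fun _ _ h => (Prod.mk.inj h).1) hdiag]
        simp
    _ = _ := by
        rw [← tsum_mul_left]
        exact tsum_congr fun k => by ring

lemma summable_norm_Gamma_div_Gamma_add_mul_pow (b w : ℂ) :
    Summable fun n : ℕ => ‖Gamma b / Gamma (b + n) * w ^ n‖ := by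
  by_cases hb : Gamma b = 0
  · simp [hb]
  have hbn : ∀ n : ℕ, b + n ≠ 0 := fun n h =>
    hb ((Complex.Gamma_eq_zero_iff b).2 ⟨n, by linear_combination h⟩)
  have hratio : ∀ n : ℕ, ‖Gamma b / Gamma (b + (n + 1 : ℕ)) * w ^ (n + 1)‖ =
      ‖w‖ / ‖b + n‖ * ‖Gamma b / Gamma (b + n) * w ^ n‖ := fun n => by
    rw [Nat.cast_succ, ← add_assoc, Gamma_add_one _ (hbn n)]
    have : ‖b + n‖ ≠ 0 := norm_ne_zero_iff.2 (hbn n)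
    simp only [norm_mul, norm_div, norm_pow, pow_succ]
    field_simp
  have hsmall : Tendsto (fun n : ℕ => ‖w‖ / ‖b + n‖) atTop (𝓝 0) := by
    refine tendsto_const_nhds.div_atTop (tendsto_atTop_mono (fun n => ?_)
      (tendsto_atTop_add_const_left atTop b.re tendsto_natCast_atTop_atTop))
    simpa using re_le_norm (b + n)
  refine summable_of_ratio_norm_eventually_le (r := 1 / 2) (by norm_num) ?_
  filter_upwards [hsmall.eventually (ge_mem_nhds (by norm_num : (0 : ℝ) < 1 / 2))] with n hn
  rw [norm_norm, norm_norm, hratio]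
  exact mul_le_mul_of_nonneg_right hn (norm_nonneg _)

lemma cpow_natCast_add_eq_pow_mul_cpow (x μ : ℂ) {n : ℕ} (h : (n : ℂ) + μ = 0 → n = 0) :
    x ^ ((n : ℂ) + μ) = x ^ n * x ^ μ := by
  rcases eq_or_ne x 0 with rfl | hx
  · rcases eq_or_ne n 0 with rfl | hn
    · simp
    · rw [zero_cpow (mt h hn), zero_pow hn, zero_mul]
  · rw [cpow_add _ _ hx, cpow_natCast]

lemma exp_eq_tsum_inv_factorial_mul_pow (w : ℂ) :
    exp w = ∑' m : ℕ, (m.factorial : ℂ)⁻¹ * w ^ m := by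
  rw [exp_eq_exp_ℂ, NormedSpace.exp_eq_tsum ℂ]
  rfl

lemma summable_norm_inv_factorial_mul_pow (w : ℂ) :
    Summable fun m : ℕ => ‖(m.factorial : ℂ)⁻¹ * w ^ m‖ :=
  (Real.summable_pow_div_factorial ‖w‖).congr fun m => by simp [div_eq_inv_mul]

lemma kummerM1_eq_tsum (b w : ℂ) :
    kummerM1 b w = ∑' n : ℕ, Gamma b / Gamma (b + n) * w ^ n :=
  tsum_congr fun n => by ring

lemma I_mul_div_two_pow_two_mul (z : ℂ) (k : ℕ) :
    (I * z / 2) ^ (2 * k) = (-1) ^ k * (z / 2) ^ (2 * k) := by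
  have hsq : (I * z / 2) ^ 2 = -1 * (z / 2) ^ 2 := by linear_combination (z / 2) ^ 2 * I_sq
  rw [pow_mul, pow_mul, hsq, mul_pow]

theorem besselJ_integral_rep_kummer_general (μ z : ℂ)
    (hμ : ∀ n : ℕ, 1 + μ ≠ -(n : ℂ)) :
    besselJ μ z =
      (1 / (2 * (π : ℂ))) * ((z / 2) ^ μ / Complex.Gamma (1 + μ)) *
        ∫ θ in (-π)..π,
          Complex.exp (Complex.I * z / 2 * Complex.exp (-Complex.I * (θ : ℂ))) *
            kummerM1 (1 + μ) (Complex.I * z / 2 * Complex.exp (Complex.I * (θ : ℂ))) := by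
  -- at `z = 0` the splitting needs `2k + μ ≠ 0` for `k ≥ 1`, which is `hμ (2k - 1)`
  have hcpow : ∀ k : ℕ, (z / 2) ^ (2 * (k : ℂ) + μ) = (z / 2) ^ (2 * k) * (z / 2) ^ μ := by
    rintro (_ | j)
    · simp
    · refine mod_cast cpow_natCast_add_eq_pow_mul_cpow (z / 2) μ fun h => absurd ?_ (hμ (2 * j + 1))
      push_cast at h ⊢
      linear_combination h
  have hexp := fun θ : ℝ => exp_eq_tsum_inv_factorial_mul_pow (I * z / 2 * exp (-I * θ))
  simp only [hexp, kummerM1_eq_tsum]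
  rw [integral_tsum_mul_tsum_eq_two_pi_mul_tsum_diag _ _ _ (summable_norm_inv_factorial_mul_pow _)
    (summable_norm_Gamma_div_Gamma_add_mul_pow _ _), besselJ, ← tsum_mul_left, ← tsum_mul_left]
  refine tsum_congr fun k => ?_
  rw [I_mul_div_two_pow_two_mul, hcpow, show μ + k + 1 = 1 + μ + k by ring]
  have hΓ : Gamma (1 + μ) ≠ 0 := Gamma_ne_zero hμ
  field_simp

theorem besselJ_integral_rep_kummer (μ z : ℂ)
    (hμ : ∀ n : ℕ, 1 + μ ≠ -(n : ℂ))
    (hz : (∀ n : ℤ, μ ≠ (n : ℂ)) → z.im ≠ 0 ∨ 0 ≤ z.re) :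
    besselJ μ z =
      (1 / (2 * (π : ℂ))) * ((z / 2) ^ μ / Complex.Gamma (1 + μ)) *
        ∫ θ in (-π)..π,
          Complex.exp (Complex.I * z / 2 * Complex.exp (-Complex.I * (θ : ℂ))) *
            kummerM1 (1 + μ) (Complex.I * z / 2 * Complex.exp (Complex.I * (θ : ℂ))) :=
  besselJ_integral_rep_kummer_general μ z hμ
end
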